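/- Let α ∈ ℝ with α ≠ −1/2, let I ⊆ ℝ be an open interval, and let u : I → ℝ be twice differentiable and satisfy u''(x) = 2u(x)³ + x·u(x) − α on I. Then the function f(x) := 2u(x)² − 2u'(x) + x has at most one zero in I; that is, if x₀, x₁ ∈ I satisfy f(x₀) = f(x₁) = 0, then x₀ = x₁. Moreover, any zero of f in I is simple. -/

import Mathlib

open Filter Topology Set

/-- The auxiliary function `f(x) = 2 u(x)^2 - 2 u'(x) + x` appearing in the
Bäcklund transformation for Painlevé II. -/
def piiF (u u' : ℝ → ℝ) : ℝ → ℝ := fun x => 2 * (u x) ^ 2 - 2 * u' x + x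

/-!
The Painlevé equation turns `f = 2u² - 2u' + x` into a solution of the linear equation
`f' = -2u f + (2α + 1)`. With an antiderivative `U` of `u`, the integrating factor gives
`(f e^{2U})' = (2α + 1) e^{2U}`, which has the constant sign of `2α + 1 ≠ 0`; so `f e^{2U}` is
strictly monotone on the interval and vanishes at most once, and at a zero `f' = 2α + 1 ≠ 0`.
-/

theorem exists_hasDerivAt_of_continuousOn {I : Set ℝ} (hIopen : IsOpen I)
    (hIconn : I.OrdConnected) {g : ℝ → ℝ} (hg : ContinuousOn g I) :
    ∃ G : ℝ → ℝ, ∀ x ∈ I, HasDerivAt G (g x) x := by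
  rcases I.eq_empty_or_nonempty with rfl | ⟨a, ha⟩
  · exact ⟨0, fun x hx => hx.elim⟩
  refine ⟨fun x => ∫ t in a..x, g t, fun x hx => ?_⟩
  exact intervalIntegral.integral_hasDerivAt_right
    ((hg.mono (hIconn.uIcc_subset ha hx)).intervalIntegrable)
    (hg.stronglyMeasurableAtFilter hIopen x hx) (hg.continuousAt (hIopen.mem_nhds hx))

theorem subsingleton_inter_preimage_zero_of_hasDerivAt_eq_mul_add {I : Set ℝ}
    (hIopen : IsOpen I) (hIconn : I.OrdConnected) {f p : ℝ → ℝ} {c : ℝ} (hc : c ≠ 0)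
    (hp : ContinuousOn p I) (hf : ∀ x ∈ I, HasDerivAt f (p x * f x + c) x) :
    (I ∩ f ⁻¹' {0}).Subsingleton := by
  obtain ⟨P, hP⟩ := exists_hasDerivAt_of_continuousOn hIopen hIconn hp
  set h : ℝ → ℝ := fun x => c⁻¹ * (f x * Real.exp (-P x))
  have hh : ∀ x ∈ I, HasDerivAt h (Real.exp (-P x)) x := fun x hx => by
    refine (((hf x hx).mul (hP x hx).neg.exp).const_mul c⁻¹).congr_deriv ?_
    rw [Pi.neg_apply]
    field_simp
    ring
  have hmono : StrictMonoOn h I := by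
    refine strictMonoOn_of_hasDerivWithinAt_pos (convex_iff_ordConnected.mpr hIconn)
      (fun x hx => (hh x hx).continuousAt.continuousWithinAt) (fun x hx => ?_)
      (fun x _ => Real.exp_pos (-P x))
    rw [hIopen.interior_eq] at hx ⊢
    exact (hh x hx).hasDerivWithinAt
  rintro x₀ ⟨hx₀, hfx₀ : f x₀ = 0⟩ x₁ ⟨hx₁, hfx₁ : f x₁ = 0⟩
  refine hmono.injOn hx₀ hx₁ ?_
  simp only [h, hfx₀, hfx₁, zero_mul, mul_zero]

theorem hasDerivAt_piiF {α x : ℝ} {u u' u'' : ℝ → ℝ} (hu : HasDerivAt u (u' x) x)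
    (hu' : HasDerivAt u' (u'' x) x) (hPII : u'' x = 2 * (u x) ^ 3 + x * u x - α) :
    HasDerivAt (piiF u u') (-2 * u x * piiF u u' x + (2 * α + 1)) x := by
  refine ((((hu.pow 2).const_mul 2).sub (hu'.const_mul 2)).add (hasDerivAt_id x)).congr_deriv ?_
  simp only [piiF, hPII]
  ring

/-- if `α ≠ -1/2` and `u` solves the inhomogeneous Painlevé II
equation `u'' = 2 u^3 + x u - α` on an open interval `I`, then
`f = 2 u^2 - 2 u' + x` has at most one zero in `I`, and every zero of `f`
in `I` is simple (the derivative of `f` does not vanish there). -/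
theorem piiF_at_most_one_zero (α : ℝ) (hα : α ≠ -1/2) (I : Set ℝ)
    (hIopen : IsOpen I) (hIconn : I.OrdConnected) (u u' u'' : ℝ → ℝ)
    (hu : ∀ x ∈ I, HasDerivAt u (u' x) x)
    (hu' : ∀ x ∈ I, HasDerivAt u' (u'' x) x)
    (hPII : ∀ x ∈ I, u'' x = 2 * (u x) ^ 3 + x * u x - α) :
    (∀ x₀ ∈ I, ∀ x₁ ∈ I, piiF u u' x₀ = 0 → piiF u u' x₁ = 0 → x₀ = x₁) ∧
    (∀ z ∈ I, piiF u u' z = 0 → deriv (piiF u u') z ≠ 0) := by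
  have hc : 2 * α + 1 ≠ 0 := fun h => hα (by linarith)
  have hf : ∀ x ∈ I, HasDerivAt (piiF u u') (-2 * u x * piiF u u' x + (2 * α + 1)) x :=
    fun x hx => hasDerivAt_piiF (hu x hx) (hu' x hx) (hPII x hx)
  have hp : ContinuousOn (fun x => -2 * u x) I :=
    fun x hx => ((hu x hx).continuousAt.const_mul (-2)).continuousWithinAt
  refine ⟨fun x₀ hx₀ x₁ hx₁ h₀ h₁ => ?_, fun z hz hfz => ?_⟩
  · exact subsingleton_inter_preimage_zero_of_hasDerivAt_eq_mul_add hIopen hIconn hc hp hf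
      ⟨hx₀, h₀⟩ ⟨hx₁, h₁⟩
  · rwa [(hf z hz).deriv, hfz, mul_zero, zero_add]
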